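/- Let $n \geq 3$ and for $x_0 \in \mathbb{R}^n$, $\lambda > 0$, define the Kelvin transform of a function $w$ by $w_{x_0,\lambda}(x) = \left(\frac{\lambda}{|x-x_0|}\right)^{n-2} w\left(x_0 + \frac{\lambda^2 (x - x_0)}{|x - x_0|^2}\right)$. Suppose $w \in C^2(\mathbb{R}^n)$ is positive and satisfies $w_{x,\lambda}(y) \leq w(y)$ for all $x \in \mathbb{R}^n$, all $\lambda > 0$, and all $y$ with $|y - x| \geq \lambda$. Then $w$ is constant. -/

import Mathlib

/-!
Given `y ≠ z` and `0 < r < 1`, there is a sphere that `y` lies outside of, whose inversion sends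
`y` to `z`, and for which the Kelvin factor at `y` is `r ^ (n - 2)`. The hypothesis therefore gives
`r ^ (n - 2) * w z ≤ w y`; letting `r → 1` yields `w z ≤ w y`, and by symmetry `w y = w z`.
-/

/-- Kelvin transform of `w` with respect to the sphere `∂B_λ(x₀)`. -/
noncomputable def kelvin {n : ℕ} (w : EuclideanSpace ℝ (Fin n) → ℝ)
    (x₀ : EuclideanSpace ℝ (Fin n)) (l : ℝ) (x : EuclideanSpace ℝ (Fin n)) : ℝ :=
  (l / ‖x - x₀‖) ^ ((n : ℝ) - 2) * w (x₀ + (l ^ 2 / ‖x - x₀‖ ^ 2) • (x - x₀))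

open Filter Topology

section

variable {n : ℕ} {w : EuclideanSpace ℝ (Fin n) → ℝ}

/-- The witnesses are `x = y - a • (y - z)` with `a = (1 - r²)⁻¹` and `l = r * ‖y - x‖`. -/
theorem exists_kelvin_apply_eq_rpow_mul {y z : EuclideanSpace ℝ (Fin n)} (hyz : y ≠ z) {r : ℝ}
    (hr₀ : 0 < r) (hr₁ : r < 1) :
    ∃ x l, 0 < l ∧ l ≤ ‖y - x‖ ∧ kelvin w x l y = r ^ ((n : ℝ) - 2) * w z := by
  set a := (1 - r ^ 2)⁻¹
  have ha : 0 < a := inv_pos.mpr (by nlinarith)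
  have hd : 0 < ‖y - z‖ := norm_pos_iff.mpr (sub_ne_zero.mpr hyz)
  have hyx : y - (y - a • (y - z)) = a • (y - z) := sub_sub_cancel y _
  have hnorm : ‖a • (y - z)‖ = a * ‖y - z‖ := by rw [norm_smul, Real.norm_of_nonneg ha.le]
  refine ⟨y - a • (y - z), r * (a * ‖y - z‖), by positivity, ?_, ?_⟩
  · rw [hyx, hnorm]
    exact mul_le_of_le_one_left (by positivity) hr₁.le
  · have hratio : r * (a * ‖y - z‖) / ‖a • (y - z)‖ = r := by
      rw [hnorm]
      field_simp
    have hinv :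
        y - a • (y - z) + ((r * (a * ‖y - z‖)) ^ 2 / ‖a • (y - z)‖ ^ 2) • a • (y - z) = z := by
      have : r ^ 2 * a = a - 1 := by
        have : a * (1 - r ^ 2) = 1 := inv_mul_cancel₀ (by nlinarith)
        linarith
      rw [← div_pow, hratio, smul_smul, this]
      module
    unfold kelvin
    rw [hyx, hratio, hinv]

theorem le_of_forall_kelvin_le
    (hks : ∀ (x : EuclideanSpace ℝ (Fin n)) (l : ℝ), 0 < l →
      ∀ y : EuclideanSpace ℝ (Fin n), l ≤ ‖y - x‖ → kelvin w x l y ≤ w y)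
    (y z : EuclideanSpace ℝ (Fin n)) : w z ≤ w y := by
  rcases eq_or_ne y z with rfl | hyz
  · exact le_rfl
  have hlim : Tendsto (fun r : ℝ => r ^ ((n : ℝ) - 2) * w z) (𝓝[<] 1) (𝓝 (w z)) := by
    have := (Real.continuousAt_rpow_const 1 ((n : ℝ) - 2) (Or.inl one_ne_zero)).tendsto
    simpa using (this.mul_const (w z)).mono_left nhdsWithin_le_nhds
  refine le_of_tendsto hlim ?_
  filter_upwards [Ioo_mem_nhdsLT zero_lt_one] with r ⟨hr₀, hr₁⟩
  obtain ⟨x, l, hl, hly, hk⟩ := exists_kelvin_apply_eq_rpow_mul (w := w) hyz hr₀ hr₁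
  exact hk ▸ hks x l hl y hly

end

theorem stmt_15_general (n : ℕ) (w : EuclideanSpace ℝ (Fin n) → ℝ)
    (hks : ∀ (x : EuclideanSpace ℝ (Fin n)) (l : ℝ), 0 < l →
      ∀ y : EuclideanSpace ℝ (Fin n), l ≤ ‖y - x‖ → kelvin w x l y ≤ w y) :
    ∀ y z : EuclideanSpace ℝ (Fin n), w y = w z :=
  fun y z => le_antisymm (le_of_forall_kelvin_le hks z y) (le_of_forall_kelvin_le hks y z)

theorem stmt_15 (n : ℕ) (hn : 3 ≤ n) (w : EuclideanSpace ℝ (Fin n) → ℝ)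
    (hw : ContDiff ℝ 2 w) (hpos : ∀ x, 0 < w x)
    (hks : ∀ (x : EuclideanSpace ℝ (Fin n)) (l : ℝ), 0 < l →
      ∀ y : EuclideanSpace ℝ (Fin n), l ≤ ‖y - x‖ → kelvin w x l y ≤ w y) :
    ∀ y z : EuclideanSpace ℝ (Fin n), w y = w z :=
  stmt_15_general n w hks
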